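/- arXiv:1801.04745 — 2 statements merged into one kernel-verified Lean document; each statement's English description precedes it below -/
import Mathlib

section
/- Fix s ∈ S and v⁰ ∈ ℝ^S, and for each n ≥ 0 let vⁿ = Lⁿv⁰ and let π_sⁿ ∈ argmax_{π_s ∈ Δ(A_s)} inf_{P∈G_s} {L_P^{π_s} vⁿ}(s). Then the sequence {π_sⁿ}_{n≥1} has a convergent subsequence, and every limit point π_s* of {π_sⁿ} is an S-robust randomized action of state s, i.e., π_s* ∈ argmax_{π_s ∈ Δ(A_s)} inf_{P∈G_s} {L_P^{π_s} v*_∞}(s), where v*_∞ is the unique fixed point of L. -/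
open MeasureTheory Finset ENNReal

noncomputable section

/-- The per-state parameter space: a transition row `p̃(·|s,·) : A → S → ℝ`, a reward row
`r̃(s,·) : A → ℝ`, and the auxiliary scenario index `ñ ∈ ℕ`. -/
abbrev MDPParam (S A : Type) : Type := (A → S → ℝ) × (A → ℝ) × ℕ

variable {S A : Type} [Fintype S] [Fintype A]

/-- `{L_P^{π_s} v}(s)` : the expected one-step robust Bellman payoff under distribution `P`. -/
def bellmanLP (γ : ℝ) (P : ProbabilityMeasure (MDPParam S A)) (πs : A → ℝ) (v : S → ℝ) : ℝ :=
  ∫ ω, (∑ a, πs a * (ω.2.1 a + γ * ∑ s', ω.1 a s' * v s')) ∂(P : Measure (MDPParam S A))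

/-- `inf_{P ∈ G_s} {L_P^{π_s} v}(s)`. -/
def robInf (γ : ℝ) (G : S → Set (ProbabilityMeasure (MDPParam S A)))
    (s : S) (πs : A → ℝ) (v : S → ℝ) : ℝ :=
  ⨅ P : G s, bellmanLP γ (P : ProbabilityMeasure (MDPParam S A)) πs v

/-- The robust Bellman operator `L`:
`{Lv}(s) = max_{π_s ∈ Δ(A_s)} inf_{P ∈ G_s} {L_P^{π_s} v}(s)`. -/
def bellmanL (γ : ℝ) (G : S → Set (ProbabilityMeasure (MDPParam S A))) (v : S → ℝ) : S → ℝ :=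
  fun s => ⨆ πs : stdSimplex ℝ A, robInf γ G s (πs : A → ℝ) v

/-- Standing assumptions on the state-wise ambiguity sets `G_s`: nonempty, convex
(closed under mixtures), weakly compact, and all members supported on a common compact
set on which each transition row is a probability vector on `S` and all rewards lie
in `[0, rmax]`. -/
def IsGoodAmbiguity (rmax : ℝ) (G : S → Set (ProbabilityMeasure (MDPParam S A))) : Prop :=
  ∀ s : S, (G s).Nonempty ∧
    (∀ P ∈ G s, ∀ Q ∈ G s, ∀ θ : ℝ≥0∞, θ ≤ 1 →
      ∀ R : ProbabilityMeasure (MDPParam S A),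
        (R : Measure (MDPParam S A)) =
          θ • (P : Measure (MDPParam S A)) + (1 - θ) • (Q : Measure (MDPParam S A)) →
        R ∈ G s) ∧
    IsCompact (G s) ∧
    ∃ K : Set (MDPParam S A), IsCompact K ∧
      (∀ ω ∈ K, (∀ a, (∀ s', 0 ≤ ω.1 a s') ∧ ∑ s', ω.1 a s' = 1) ∧
        ∀ a, ω.2.1 a ∈ Set.Icc (0 : ℝ) rmax) ∧
      (∀ P ∈ G s, (P : Measure (MDPParam S A)) K = 1)

/-!
The robust Bellman operator is a `γ`-contraction in the sup norm, so `vⁿ → v*_∞`. On the common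
support of the ambiguity set, `{L_P^π v}(s)` is `γ`-Lipschitz in `v` and Lipschitz in `π` for the
`ℓ¹` distance, uniformly in `P`; these bounds pass to the infimum over `P`, so the robust value
`(π, v) ↦ inf_P {L_P^π v}(s)` is jointly continuous on `Δ(A) × ℝ^S`. Along a subsequence with
`π^{φ n} → π*` (the simplex is compact), the values `inf_P {L_P^{π^{φ n}} v^{φ n}}(s) = {L v^{φ n}}(s)`
therefore converge both to `inf_P {L_P^{π*} v*_∞}(s)` and to `{L v*_∞}(s)`.
-/

open Filter Topology Matrix

section ConditionallyComplete

variable {ι : Sort*} [Nonempty ι] {f g : ι → ℝ} {C : ℝ}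

lemma ciInf_le_ciInf_add (hf : BddBelow (Set.range f)) (hfg : ∀ i, f i ≤ g i + C) :
    ⨅ i, f i ≤ (⨅ i, g i) + C := by
  have : (⨅ i, f i) - C ≤ ⨅ i, g i := le_ciInf fun i => by linarith [ciInf_le hf i, hfg i]
  linarith

lemma ciSup_le_ciSup_add (hg : BddAbove (Set.range g)) (hfg : ∀ i, f i ≤ g i + C) :
    ⨆ i, f i ≤ (⨆ i, g i) + C :=
  ciSup_le fun i => (hfg i).trans (add_le_add_left (le_ciSup hg i) C)

lemma abs_ciInf_sub_ciInf_le (hf : BddBelow (Set.range f)) (hg : BddBelow (Set.range g))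
    (hfg : ∀ i, |f i - g i| ≤ C) : |(⨅ i, f i) - ⨅ i, g i| ≤ C := by
  have hfg' i := abs_sub_le_iff.1 (hfg i)
  rw [abs_sub_le_iff]
  constructor
  · linarith [ciInf_le_ciInf_add hf fun i => show f i ≤ g i + C by linarith [hfg' i]]
  · linarith [ciInf_le_ciInf_add hg fun i => show g i ≤ f i + C by linarith [hfg' i]]

lemma abs_ciSup_sub_ciSup_le (hf : BddAbove (Set.range f)) (hg : BddAbove (Set.range g))
    (hfg : ∀ i, |f i - g i| ≤ C) : |(⨆ i, f i) - ⨆ i, g i| ≤ C := by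
  have hfg' i := abs_sub_le_iff.1 (hfg i)
  rw [abs_sub_le_iff]
  constructor
  · linarith [ciSup_le_ciSup_add hg fun i => show f i ≤ g i + C by linarith [hfg' i]]
  · linarith [ciSup_le_ciSup_add hf fun i => show g i ≤ f i + C by linarith [hfg' i]]

end ConditionallyComplete

section DotProduct

variable {ι κ : Type*} [Fintype ι]

lemma abs_dotProduct_le_of_abs_le (d : ι → ℝ) {x : ι → ℝ} {M : ℝ} (hx : ∀ i, |x i| ≤ M) :
    |d ⬝ᵥ x| ≤ (∑ i, |d i|) * M :=
  calc |d ⬝ᵥ x| ≤ ∑ i, |d i * x i| := Finset.abs_sum_le_sum_abs _ _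
    _ ≤ ∑ i, |d i| * M := Finset.sum_le_sum fun i _ => by
        rw [abs_mul]; exact mul_le_mul_of_nonneg_left (hx i) (abs_nonneg _)
    _ = (∑ i, |d i|) * M := (Finset.sum_mul _ _ _).symm

lemma sum_abs_eq_one_of_mem_stdSimplex {p : ι → ℝ} (hp : p ∈ stdSimplex ℝ ι) :
    ∑ i, |p i| = 1 := by
  simpa only [abs_of_nonneg (hp.1 _)] using hp.2

lemma abs_dotProduct_le_of_mem_stdSimplex {p x : ι → ℝ} {M : ℝ} (hp : p ∈ stdSimplex ℝ ι)
    (hx : ∀ i, |x i| ≤ M) : |p ⬝ᵥ x| ≤ M := by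
  simpa [sum_abs_eq_one_of_mem_stdSimplex hp] using abs_dotProduct_le_of_abs_le p hx

lemma abs_mulVec_apply_le_of_mem_stdSimplex {M : Matrix κ ι ℝ} (hM : ∀ k, M k ∈ stdSimplex ℝ ι)
    (x : ι → ℝ) (k : κ) : |(M *ᵥ x) k| ≤ ‖x‖ :=
  abs_dotProduct_le_of_mem_stdSimplex (hM k) fun i => by
    simpa only [Real.norm_eq_abs] using norm_le_pi_norm x i

lemma nonempty_of_mem_stdSimplex {p : ι → ℝ} (hp : p ∈ stdSimplex ℝ ι) : Nonempty ι := by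
  by_contra h
  rw [not_nonempty_iff] at h
  simp [stdSimplex_of_isEmpty_index] at hp

end DotProduct

section ActionValues

variable {S A : Type} [Fintype S] {γ rmax : ℝ} {ω : MDPParam S A}

def IsAdmissibleParam (rmax : ℝ) (ω : MDPParam S A) : Prop :=
  (∀ a, ω.1 a ∈ stdSimplex ℝ S) ∧ ∀ a, ω.2.1 a ∈ Set.Icc 0 rmax

/-- `a ↦ r̃(s,a) + γ Σ_{s'} p̃(s'|s,a) v(s')` in the paper's notation. -/
def actionValues (γ : ℝ) (v : S → ℝ) (ω : MDPParam S A) : A → ℝ :=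
  ω.2.1 + γ • (of ω.1 *ᵥ v)

lemma abs_actionValues_le (hγ : 0 ≤ γ) (hω : IsAdmissibleParam rmax ω) (v : S → ℝ) (a : A) :
    |actionValues γ v ω a| ≤ rmax + γ * ‖v‖ := by
  have hr : |ω.2.1 a| ≤ rmax := by
    rw [abs_of_nonneg (hω.2 a).1]; exact (hω.2 a).2
  have hp : |γ * (of ω.1 *ᵥ v) a| ≤ γ * ‖v‖ := by
    rw [abs_mul, abs_of_nonneg hγ]
    exact mul_le_mul_of_nonneg_left (abs_mulVec_apply_le_of_mem_stdSimplex hω.1 v a) hγ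
  simpa only [actionValues, Pi.add_apply, Pi.smul_apply, smul_eq_mul]
    using (abs_add_le _ _).trans (add_le_add hr hp)

lemma abs_actionValues_sub_le (hγ : 0 ≤ γ) (hω : IsAdmissibleParam rmax ω) (v u : S → ℝ) (a : A) :
    |actionValues γ v ω a - actionValues γ u ω a| ≤ γ * ‖v - u‖ := by
  have hsub : actionValues γ v ω a - actionValues γ u ω a = γ * (of ω.1 *ᵥ (v - u)) a := by
    simp only [actionValues, Pi.add_apply, Pi.smul_apply, smul_eq_mul]
    rw [mulVec_sub, Pi.sub_apply]
    ring
  rw [hsub, abs_mul, abs_of_nonneg hγ]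
  exact mul_le_mul_of_nonneg_left (abs_mulVec_apply_le_of_mem_stdSimplex hω.1 _ a) hγ

end ActionValues

section Payoff

variable {γ rmax : ℝ} {ω : MDPParam S A}

lemma bellmanLP_eq_integral (P : ProbabilityMeasure (MDPParam S A)) (πs : A → ℝ) (v : S → ℝ) :
    bellmanLP γ P πs v = ∫ ω, πs ⬝ᵥ actionValues γ v ω ∂(P : Measure (MDPParam S A)) :=
  rfl

lemma continuous_dotProduct_actionValues (γ : ℝ) (πs : A → ℝ) (v : S → ℝ) :
    Continuous fun ω : MDPParam S A => πs ⬝ᵥ actionValues γ v ω := by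
  unfold actionValues
  fun_prop

lemma abs_dotProduct_actionValues_le (hγ : 0 ≤ γ) (hω : IsAdmissibleParam rmax ω)
    {πs : A → ℝ} (hπ : πs ∈ stdSimplex ℝ A) (v : S → ℝ) :
    |πs ⬝ᵥ actionValues γ v ω| ≤ rmax + γ * ‖v‖ :=
  abs_dotProduct_le_of_mem_stdSimplex hπ (abs_actionValues_le hγ hω v)

lemma abs_dotProduct_actionValues_sub_le (hγ : 0 ≤ γ) (hω : IsAdmissibleParam rmax ω)
    {πs : A → ℝ} (hπ : πs ∈ stdSimplex ℝ A) (πs' : A → ℝ) (v u : S → ℝ) :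
    |πs ⬝ᵥ actionValues γ v ω - πs' ⬝ᵥ actionValues γ u ω|
      ≤ γ * ‖v - u‖ + (∑ a, |πs a - πs' a|) * (rmax + γ * ‖u‖) := by
  have hsplit : πs ⬝ᵥ actionValues γ v ω - πs' ⬝ᵥ actionValues γ u ω
      = πs ⬝ᵥ (actionValues γ v ω - actionValues γ u ω) + (πs - πs') ⬝ᵥ actionValues γ u ω := by
    rw [dotProduct_sub, sub_dotProduct]; ring
  rw [hsplit]
  refine (abs_add_le _ _).trans (add_le_add ?_ ?_)
  · exact abs_dotProduct_le_of_mem_stdSimplex hπ (abs_actionValues_sub_le hγ hω v u)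
  · exact abs_dotProduct_le_of_abs_le _ (abs_actionValues_le hγ hω u)

end Payoff

section Expectation

variable {γ rmax : ℝ} {P : ProbabilityMeasure (MDPParam S A)} {πs πs' : A → ℝ}

lemma integrable_dotProduct_actionValues (hγ : 0 ≤ γ)
    (hP : ∀ᵐ ω ∂(P : Measure (MDPParam S A)), IsAdmissibleParam rmax ω)
    (hπ : πs ∈ stdSimplex ℝ A) (v : S → ℝ) :
    Integrable (fun ω => πs ⬝ᵥ actionValues γ v ω) (P : Measure (MDPParam S A)) :=
  .of_bound (continuous_dotProduct_actionValues γ πs v).aestronglyMeasurable (rmax + γ * ‖v‖)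
    (hP.mono fun _ hω => abs_dotProduct_actionValues_le hγ hω hπ v)

lemma abs_bellmanLP_le (hγ : 0 ≤ γ)
    (hP : ∀ᵐ ω ∂(P : Measure (MDPParam S A)), IsAdmissibleParam rmax ω)
    (hπ : πs ∈ stdSimplex ℝ A) (v : S → ℝ) :
    |bellmanLP γ P πs v| ≤ rmax + γ * ‖v‖ := by
  rw [bellmanLP_eq_integral]
  simpa using norm_integral_le_of_norm_le_const
    (hP.mono fun _ hω => (Real.norm_eq_abs _).trans_le (abs_dotProduct_actionValues_le hγ hω hπ v))

lemma abs_bellmanLP_sub_le (hγ : 0 ≤ γ)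
    (hP : ∀ᵐ ω ∂(P : Measure (MDPParam S A)), IsAdmissibleParam rmax ω)
    (hπ : πs ∈ stdSimplex ℝ A) (hπ' : πs' ∈ stdSimplex ℝ A) (v u : S → ℝ) :
    |bellmanLP γ P πs v - bellmanLP γ P πs' u|
      ≤ γ * ‖v - u‖ + (∑ a, |πs a - πs' a|) * (rmax + γ * ‖u‖) := by
  rw [bellmanLP_eq_integral, bellmanLP_eq_integral, ← integral_sub
    (integrable_dotProduct_actionValues hγ hP hπ v) (integrable_dotProduct_actionValues hγ hP hπ' u)]
  simpa using norm_integral_le_of_norm_le_const (hP.mono fun _ hω =>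
    (Real.norm_eq_abs _).trans_le (abs_dotProduct_actionValues_sub_le hγ hω hπ πs' v u))

end Expectation

section Robust

variable {γ rmax : ℝ} {G : S → Set (ProbabilityMeasure (MDPParam S A))} {πs πs' : A → ℝ}

lemma IsGoodAmbiguity.ae_isAdmissibleParam (hG : IsGoodAmbiguity rmax G) {t : S}
    {P : ProbabilityMeasure (MDPParam S A)} (hP : P ∈ G t) :
    ∀ᵐ ω ∂(P : Measure (MDPParam S A)), IsAdmissibleParam rmax ω := by
  obtain ⟨-, -, -, K, hK, hKadm, hKprob⟩ := hG t
  have hKae : K ∈ ae (P : Measure (MDPParam S A)) :=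
    (mem_ae_iff_prob_eq_one hK.isClosed.measurableSet).2 (hKprob P hP)
  exact Filter.mem_of_superset hKae hKadm

lemma bddBelow_range_bellmanLP (hγ : 0 ≤ γ) (hG : IsGoodAmbiguity rmax G)
    (hπ : πs ∈ stdSimplex ℝ A) (t : S) (v : S → ℝ) :
    BddBelow (Set.range fun P : G t => bellmanLP γ (P : ProbabilityMeasure (MDPParam S A)) πs v) :=
  ⟨-(rmax + γ * ‖v‖), Set.forall_mem_range.2 fun P =>
    (abs_le.1 (abs_bellmanLP_le hγ (hG.ae_isAdmissibleParam P.2) hπ v)).1⟩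

lemma robInf_le (hγ : 0 ≤ γ) (hG : IsGoodAmbiguity rmax G) (hπ : πs ∈ stdSimplex ℝ A)
    (t : S) (v : S → ℝ) : robInf γ G t πs v ≤ rmax + γ * ‖v‖ := by
  obtain ⟨P, hP⟩ := (hG t).1
  exact (ciInf_le (bddBelow_range_bellmanLP hγ hG hπ t v) ⟨P, hP⟩).trans
    (abs_le.1 (abs_bellmanLP_le hγ (hG.ae_isAdmissibleParam hP) hπ v)).2

lemma abs_robInf_sub_le (hγ : 0 ≤ γ) (hG : IsGoodAmbiguity rmax G)
    (hπ : πs ∈ stdSimplex ℝ A) (hπ' : πs' ∈ stdSimplex ℝ A) (t : S) (v u : S → ℝ) :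
    |robInf γ G t πs v - robInf γ G t πs' u|
      ≤ γ * ‖v - u‖ + (∑ a, |πs a - πs' a|) * (rmax + γ * ‖u‖) := by
  have := (hG t).1.to_subtype
  exact abs_ciInf_sub_ciInf_le (bddBelow_range_bellmanLP hγ hG hπ t v)
    (bddBelow_range_bellmanLP hγ hG hπ' t u)
    fun P => abs_bellmanLP_sub_le hγ (hG.ae_isAdmissibleParam P.2) hπ hπ' v u

lemma tendsto_robInf {ι : Type*} {l : Filter ι} {πn : ι → A → ℝ} {vn : ι → S → ℝ} {v : S → ℝ}
    (hγ : 0 ≤ γ) (hG : IsGoodAmbiguity rmax G) (hπn : ∀ i, πn i ∈ stdSimplex ℝ A)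
    (hπ : πs ∈ stdSimplex ℝ A) (hπlim : Tendsto πn l (𝓝 πs)) (hvlim : Tendsto vn l (𝓝 v))
    (t : S) : Tendsto (fun i => robInf γ G t (πn i) (vn i)) l (𝓝 (robInf γ G t πs v)) := by
  have hv : Tendsto (fun i => ‖vn i - v‖) l (𝓝 0) := tendsto_iff_norm_sub_tendsto_zero.1 hvlim
  have hπ1 : Tendsto (fun i => ∑ a, |πn i a - πs a|) l (𝓝 0) := by
    simpa using tendsto_finsetSum Finset.univ fun a _ =>
      ((tendsto_pi_nhds.1 hπlim a).sub_const (πs a)).abs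
  rw [tendsto_iff_norm_sub_tendsto_zero]
  refine squeeze_zero (fun _ => norm_nonneg _) (fun i => abs_robInf_sub_le hγ hG (hπn i) hπ t _ _)
    ?_
  simpa using (hv.const_mul γ).add (hπ1.mul_const (rmax + γ * ‖v‖))

lemma abs_bellmanL_sub_le [Nonempty A] (hγ : 0 ≤ γ) (hG : IsGoodAmbiguity rmax G)
    (v u : S → ℝ) (t : S) : |bellmanL γ G v t - bellmanL γ G u t| ≤ γ * ‖v - u‖ := by
  have bdd (w : S → ℝ) :
      BddAbove (Set.range fun π : stdSimplex ℝ A => robInf γ G t (π : A → ℝ) w) :=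
    ⟨rmax + γ * ‖w‖, Set.forall_mem_range.2 fun π => robInf_le hγ hG π.2 t w⟩
  exact abs_ciSup_sub_ciSup_le (bdd v) (bdd u) fun π =>
    (abs_robInf_sub_le hγ hG π.2 π.2 t v u).trans_eq (by simp)

lemma lipschitzWith_bellmanL [Nonempty A] (hγ : 0 ≤ γ) (hG : IsGoodAmbiguity rmax G) :
    LipschitzWith ⟨γ, hγ⟩ (bellmanL γ G) :=
  .of_dist_le_mul fun v u => (dist_pi_le_iff (by positivity)).2 fun t => by
    rw [Real.dist_eq, dist_eq_norm]
    exact abs_bellmanL_sub_le hγ hG v u t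

lemma tendsto_iterate_bellmanL [Nonempty A] (hγ : 0 ≤ γ) (hγ1 : γ < 1)
    (hG : IsGoodAmbiguity rmax G) {vinf : S → ℝ} (hfix : bellmanL γ G vinf = vinf) (v0 : S → ℝ) :
    Tendsto (fun n => (bellmanL γ G)^[n] v0) atTop (𝓝 vinf) := by
  have hL : ContractingWith ⟨γ, hγ⟩ (bellmanL γ G) := ⟨hγ1, lipschitzWith_bellmanL hγ hG⟩
  rw [hL.fixedPoint_unique hfix]
  exact hL.tendsto_iterate_fixedPoint v0

end Robust

theorem value_iteration_limit_points_are_S_robust_general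
    (γ rmax : ℝ) (hγ : 0 < γ) (hγ1 : γ < 1)
    (G : S → Set (ProbabilityMeasure (MDPParam S A)))
    (hG : IsGoodAmbiguity rmax G)
    (s : S) (v0 : S → ℝ)
    (πseq : ℕ → (A → ℝ))
    (hπseq : ∀ n, πseq n ∈ stdSimplex ℝ A)
    (hπargmax : ∀ n, robInf γ G s (πseq n) ((bellmanL γ G)^[n] v0)
      = bellmanL γ G ((bellmanL γ G)^[n] v0) s)
    (vinf : S → ℝ)
    (hfix : bellmanL γ G vinf = vinf) :
    (∃ (φ : ℕ → ℕ) (πlim : A → ℝ), StrictMono φ ∧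
        Filter.Tendsto (fun n => πseq (φ n)) Filter.atTop (nhds πlim)) ∧
    ∀ πlim : A → ℝ,
      (∃ φ : ℕ → ℕ, StrictMono φ ∧
        Filter.Tendsto (fun n => πseq (φ n)) Filter.atTop (nhds πlim)) →
      πlim ∈ stdSimplex ℝ A ∧
        robInf γ G s πlim vinf = bellmanL γ G vinf s := by
  have : Nonempty A := nonempty_of_mem_stdSimplex (hπseq 0)
  refine ⟨?_, fun πlim ⟨φ, hφ, hπlim⟩ => ?_⟩
  · obtain ⟨πlim, -, φ, hφ, hπlim⟩ := (isCompact_stdSimplex ℝ A).tendsto_subseq hπseq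
    exact ⟨φ, πlim, hφ, hπlim⟩
  · have hπlim_mem : πlim ∈ stdSimplex ℝ A :=
      (isClosed_stdSimplex ℝ A).mem_of_tendsto hπlim (.of_forall fun n => hπseq (φ n))
    have hvφ := (tendsto_iterate_bellmanL hγ.le hγ1 hG hfix v0).comp hφ.tendsto_atTop
    have hrob := tendsto_robInf hγ.le hG (fun n => hπseq (φ n)) hπlim_mem hπlim hvφ s
    have hval : Tendsto (fun n => bellmanL γ G ((bellmanL γ G)^[φ n] v0) s) atTop
        (𝓝 (bellmanL γ G vinf s)) :=
      ((continuous_apply s).tendsto _).comp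
        ((lipschitzWith_bellmanL hγ.le hG).continuous.tendsto vinf |>.comp hvφ)
    exact ⟨hπlim_mem, tendsto_nhds_unique (hrob.congr fun n => hπargmax (φ n)) hval⟩

/-- value-iteration maximizers subconverge, and every limit point is an
S-robust randomized action at state `s`, i.e. a robust maximizer for the unique fixed
point `v*_∞` of the robust Bellman operator `L`. -/
theorem value_iteration_limit_points_are_S_robust
    (γ rmax : ℝ) (hγ : 0 < γ) (hγ1 : γ < 1) (hrmax : 0 ≤ rmax)
    (G : S → Set (ProbabilityMeasure (MDPParam S A)))
    (hG : IsGoodAmbiguity rmax G)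
    (s : S) (v0 : S → ℝ)
    (πseq : ℕ → (A → ℝ))
    (hπseq : ∀ n, πseq n ∈ stdSimplex ℝ A)
    (hπargmax : ∀ n, robInf γ G s (πseq n) ((bellmanL γ G)^[n] v0)
      = bellmanL γ G ((bellmanL γ G)^[n] v0) s)
    (vinf : S → ℝ)
    (hfix : bellmanL γ G vinf = vinf)
    (huniq : ∀ u : S → ℝ, bellmanL γ G u = u → u = vinf) :
    (∃ (φ : ℕ → ℕ) (πlim : A → ℝ), StrictMono φ ∧
        Filter.Tendsto (fun n => πseq (φ n)) Filter.atTop (nhds πlim)) ∧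
    ∀ πlim : A → ℝ,
      (∃ φ : ℕ → ℕ, StrictMono φ ∧
        Filter.Tendsto (fun n => πseq (φ n)) Filter.atTop (nhds πlim)) →
      πlim ∈ stdSimplex ℝ A ∧
        robInf γ G s πlim vinf = bellmanL γ G vinf s :=
  value_iteration_limit_points_are_S_robust_general γ rmax hγ hγ1 G hG s v0 πseq hπseq hπargmax vinf
    hfix

end
end

section
/- The stationary and non-stationary infinite-horizon distributionally robust MDPs have the same optimal value: sup_{π∈Π^HR} inf_{P∈Ḡ_S} E_P[u(π, p̃, r̃, s_1)] = sup_{π∈Π^HR} inf_{P∈Ḡ_S^∞} E_P[u(π, p̃, r̃, s_1)], and this common value is attained by any S-robust strategy in both models. -/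
open MeasureTheory Finset ENNReal

noncomputable section

variable {S A : Type} [Fintype S] [Fintype A]

/-- History-dependent randomized policies: to each history (a list of visited
state–action pairs) and current state, assign a probability distribution on actions. -/
def IsHRPolicy (π : List (S × A) → S → A → ℝ) : Prop :=
  ∀ (h : List (S × A)) (s : S), π h s ∈ stdSimplex ℝ A

/-- Expected (undiscounted) reward collected exactly `k` steps in the future when the
current history is `h` (whose length is the current time) and the current state is `s`,
under a history-dependent policy `π` and (possibly time-varying) parameters `(p, r)`. -/
def expReward (π : List (S × A) → S → A → ℝ)
    (p : ℕ → S → A → S → ℝ) (r : ℕ → S → A → ℝ) :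
    ℕ → List (S × A) → S → ℝ
  | 0, h, s => ∑ a, π h s a * r h.length s a
  | k + 1, h, s =>
      ∑ a, π h s a * ∑ s', p h.length s a s' * expReward π p r k (h ++ [(s, a)]) s'

/-- The expected discounted total reward `u(π, p, r, s₁) = E_{Q(π)}[Σ_t γ^{t−1} r_t(s_t,a_t)]`. -/
def uDisc (γ : ℝ) (π : List (S × A) → S → A → ℝ)
    (p : ℕ → S → A → S → ℝ) (r : ℕ → S → A → ℝ) (s₁ : S) : ℝ :=
  ∑' k : ℕ, γ ^ k * expReward π p r k [] s₁

/-- `E_P[reward collected k steps ahead]` when the uncertain parameters are governed by the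
product measure `P = ⊗_{s,t} P_{s,t}`: by s- and t-rectangularity (parameters at distinct
state–time pairs are independent, and a length-`k` trajectory meets pairwise distinct
state–time pairs), the expectation of `expReward` factorizes into this nested form. -/
def expRewardAmb (π : List (S × A) → S → A → ℝ)
    (Ps : S → ℕ → ProbabilityMeasure (MDPParam S A)) :
    ℕ → List (S × A) → S → ℝ
  | 0, h, s =>
      ∫ ω, (∑ a, π h s a * ω.2.1 a) ∂((Ps s h.length : Measure (MDPParam S A)))
  | k + 1, h, s =>
      ∫ ω, (∑ a, π h s a * ∑ s', ω.1 a s' * expRewardAmb π Ps k (h ++ [(s, a)]) s')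
        ∂((Ps s h.length : Measure (MDPParam S A)))

/-- `w(π, P, s₁) = E_P[u(π, p̃, r̃, s₁)]` for the product measure `P = ⊗_{s,t} P_{s,t}`. -/
def wDisc (γ : ℝ) (π : List (S × A) → S → A → ℝ)
    (Ps : S → ℕ → ProbabilityMeasure (MDPParam S A)) (s₁ : S) : ℝ :=
  ∑' k : ℕ, γ ^ k * expRewardAmb π Ps k [] s₁

/-- An S-robust (stationary) strategy: at each state `s`, `πstar s` is a randomized action
maximizing `inf_{P ∈ G_s} {L_P^{π_s} v*_∞}(s)`, where `v*_∞` is the fixed point of `L`. -/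
def IsSRobustStationary (γ : ℝ) (G : S → Set (ProbabilityMeasure (MDPParam S A)))
    (vinf : S → ℝ) (πstar : S → A → ℝ) : Prop :=
  bellmanL γ G vinf = vinf ∧
    ∀ s, πstar s ∈ stdSimplex ℝ A ∧ robInf γ G s (πstar s) vinf = bellmanL γ G vinf s

/-!
Under the product measure every payoff is affine in the parameters of a single state–time
pair, so a law `P ∈ G_s` enters only through its mean rewards and mean transition
probabilities, and the expected discounted reward of a policy from a history satisfies a
Bellman recursion in these means. Comparing it with `v*_∞` is then a contraction with
modulus `γ`.

The S-robust strategy satisfies `v*_∞ s ≤ L_P^{π*_s} v*_∞ (s)` for every `P ∈ G_s`, so it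
guarantees `v*_∞ s₁` against every non-stationary adversary. Conversely, the set of
mean-parameter vectors of `G_s` is convex, so a minimax argument over randomized actions
yields, for every `ε > 0`, one `P_s ∈ G_s` that holds every randomized action to
`v*_∞ s + ε`; the stationary adversary playing `P_s` holds every history-dependent policy to
`v*_∞ s₁ + ε / (1 - γ)`. Hence all four values in the statement equal `v*_∞ s₁`.
-/

section General

variable {ι : Type*}

theorem Convex.sum_mul_mem_of_mem_stdSimplex [Fintype ι] {s : Set ℝ} (hs : Convex ℝ s)
    {w x : ι → ℝ} (hw : w ∈ stdSimplex ℝ ι) (hx : ∀ i, x i ∈ s) : ∑ i, w i * x i ∈ s :=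
  hs.sum_mem (fun i _ => hw.1 i) hw.2 fun i _ => hx i

theorem sum_mul_le_sum_mul_add_of_mem_stdSimplex [Fintype ι] {w x y : ι → ℝ}
    (hw : w ∈ stdSimplex ℝ ι) {b : ℝ} (h : ∀ i, x i ≤ y i + b) :
    ∑ i, w i * x i ≤ ∑ i, w i * y i + b :=
  calc ∑ i, w i * x i ≤ ∑ i, w i * (y i + b) :=
        Finset.sum_le_sum fun i _ => mul_le_mul_of_nonneg_left (h i) (hw.1 i)
    _ = ∑ i, w i * y i + b := by
        rw [Finset.sum_congr rfl fun i _ => mul_add (w i) (y i) b, Finset.sum_add_distrib,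
          ← Finset.sum_mul, hw.2, one_mul]

theorem le_div_one_sub_of_forall_le_add_mul {D : ι → ℝ} {γ ε : ℝ} (hγ1 : γ < 1)
    (hD : BddAbove (Set.range D)) (hstep : ∀ b, (∀ i, D i ≤ b) → ∀ i, D i ≤ ε + γ * b)
    (i : ι) : D i ≤ ε / (1 - γ) := by
  have : Nonempty ι := ⟨i⟩
  have hsup : ⨆ j, D j ≤ ε + γ * ⨆ j, D j := ciSup_le (hstep _ fun j => le_ciSup hD j)
  rw [le_div_iff₀ (by linarith)]
  nlinarith [le_ciSup hD i]

theorem StrongDual.apply_eq_sum_mul_apply_single [Fintype ι] [DecidableEq ι]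
    (f : StrongDual ℝ (ι → ℝ)) (x : ι → ℝ) : f x = ∑ i, x i * f (Pi.single i 1) := by
  conv_lhs => rw [← Finset.univ_sum_single x]
  refine (map_sum f _ _).trans (Finset.sum_congr rfl fun i _ => ?_)
  rw [← smul_eq_mul, ← map_smul, ← Pi.single_smul', smul_eq_mul, mul_one]

theorem StrongDual.apply_single_nonneg_of_forall_lt [DecidableEq ι] (f : StrongDual ℝ (ι → ℝ))
    {B u : ℝ} (hf : ∀ x : ι → ℝ, (∀ i, x i < B) → f x < u) (i : ι) :
    0 ≤ f (Pi.single i 1) := by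
  by_contra! hi
  set z : ι → ℝ := fun _ => B - 1
  have hz : f z < u := hf z fun _ => by simp [z]
  have hdown : ∀ t : ℝ, 0 ≤ t → f z - t * f (Pi.single i 1) < u := fun t ht => by
    have := hf (z - t • Pi.single i 1) fun j => by
      rcases eq_or_ne j i with rfl | hji
      · simp [z]; linarith
      · simp [z, hji]
    rwa [map_sub, map_smul, smul_eq_mul] at this
  have := hdown ((u - f z) / -f (Pi.single i 1)) (div_nonneg (by linarith) (by linarith))
  rw [div_mul_eq_mul_div, div_neg, mul_div_cancel_right₀ _ hi.ne] at this
  linarith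

/-- Proved by separating `D` from the open orthant below `B`; the separating functional has
nonnegative weights because that orthant is closed downwards. -/
theorem exists_mem_stdSimplex_forall_le_sum_mul [Fintype ι] {D : Set (ι → ℝ)}
    (hD : Convex ℝ D) (hDne : D.Nonempty) {B : ℝ}
    (h : ∀ x ∈ D, ∃ w ∈ stdSimplex ℝ ι, B < ∑ i, w i * x i) :
    ∃ w ∈ stdSimplex ℝ ι, ∀ x ∈ D, B ≤ ∑ i, w i * x i := by
  classical
  set O : Set (ι → ℝ) := Set.pi Set.univ fun _ => Set.Iio B
  have hdisj : Disjoint O D := by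
    refine Set.disjoint_left.2 fun x hxO hxD => ?_
    obtain ⟨w, hw, hlt⟩ := h x hxD
    exact hlt.not_ge <| (convex_Iic B).sum_mul_mem_of_mem_stdSimplex hw fun i =>
      Set.mem_Iic.2 (hxO i trivial).le
  obtain ⟨f, u, hfO, hfD⟩ := geometric_hahn_banach_open (convex_pi fun _ _ => convex_Iio B)
    (isOpen_set_pi Set.finite_univ fun _ _ => isOpen_Iio) hD hdisj
  set c : ι → ℝ := fun i => f (Pi.single i 1)
  have hf : ∀ x, f x = ∑ i, x i * c i := f.apply_eq_sum_mul_apply_single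
  have hc : ∀ i, 0 ≤ c i := f.apply_single_nonneg_of_forall_lt fun x hx => hfO x fun i _ => hx i
  have hconst : ∀ y < B, y * ∑ i, c i < u := fun y hy => by
    simpa [hf, ← Finset.mul_sum] using hfO (fun _ => y) fun _ _ => hy
  obtain ⟨x₀, hx₀⟩ := hDne
  have hpos : 0 < ∑ i, c i := by
    refine (Finset.sum_nonneg fun i _ => hc i).lt_of_ne fun hzero => ?_
    have hc0 := (Finset.sum_eq_zero_iff_of_nonneg fun i _ => hc i).1 hzero.symm
    have hu := hconst (B - 1) (by linarith)
    have hx₀u := hfD x₀ hx₀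
    rw [← hzero, mul_zero] at hu
    rw [hf, Finset.sum_eq_zero fun i hi => by rw [hc0 i hi, mul_zero]] at hx₀u
    linarith
  have hBu : B ≤ u / ∑ i, c i :=
    le_of_forall_lt fun y hy => (lt_div_iff₀ hpos).2 (hconst y hy)
  refine ⟨fun i => c i / ∑ j, c j, ⟨fun i => div_nonneg (hc i) hpos.le, ?_⟩, fun x hx => ?_⟩
  · rw [← Finset.sum_div, div_self hpos.ne']
  · calc B ≤ u / ∑ i, c i := hBu
      _ ≤ f x / ∑ i, c i := div_le_div_of_nonneg_right (hfD x hx) hpos.le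
      _ = _ := by rw [hf, Finset.sum_div]; exact Finset.sum_congr rfl fun i _ => by ring

theorem iSup_iInf_eq_of_le_of_forall_exists_le {κ κ' : Type*} [Nonempty κ'] {F : ι → κ → ℝ}
    (e : κ' → κ) (hF : ∀ i, BddBelow (Set.range (F i))) {v : ℝ} {i₀ : ι}
    (hle : ∀ k, v ≤ F i₀ k) (hexists : ∀ i, ∀ c > 0, ∃ k', F i (e k') ≤ v + c) :
    (⨆ i, ⨅ k', F i (e k')) = v ∧ (⨆ i, ⨅ k, F i k) = v ∧
      (⨅ k', F i₀ (e k')) = v ∧ (⨅ k, F i₀ k) = v := by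
  have : Nonempty ι := ⟨i₀⟩
  have : Nonempty κ := ⟨e (Classical.arbitrary κ')⟩
  have hF' : ∀ i, BddBelow (Set.range fun k' => F i (e k')) := fun i =>
    (hF i).mono (Set.range_comp_subset_range e (F i))
  have hrestrict : ∀ i, ⨅ k, F i k ≤ ⨅ k', F i (e k') := fun i =>
    le_ciInf fun k' => ciInf_le (hF i) (e k')
  have hupper : ∀ i, ⨅ k', F i (e k') ≤ v := fun i =>
    le_of_forall_pos_le_add fun c hc => (hexists i c hc).elim fun k' hk' =>
      (ciInf_le (hF' i) k').trans hk'
  have hupper' : ∀ i, ⨅ k, F i k ≤ v := fun i => (hrestrict i).trans (hupper i)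
  have hi₀ : v ≤ ⨅ k, F i₀ k := le_ciInf hle
  have hfull : ⨅ k, F i₀ k = v := le_antisymm (hupper' i₀) hi₀
  have hrestricted : ⨅ k', F i₀ (e k') = v := le_antisymm (hupper i₀) (hi₀.trans (hrestrict i₀))
  refine ⟨le_antisymm (ciSup_le hupper) ?_, le_antisymm (ciSup_le hupper') ?_,
    hrestricted, hfull⟩
  · exact le_ciSup_of_le ⟨v, Set.forall_mem_range.2 hupper⟩ i₀ hrestricted.ge
  · exact le_ciSup_of_le ⟨v, Set.forall_mem_range.2 hupper'⟩ i₀ hfull.ge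

end General

section MeanParameters

variable {rmax : ℝ}

def IsGoodParam (rmax : ℝ) (ω : MDPParam S A) : Prop :=
  (∀ a, (∀ s', 0 ≤ ω.1 a s') ∧ ∑ s', ω.1 a s' = 1) ∧ ∀ a, ω.2.1 a ∈ Set.Icc (0 : ℝ) rmax

def IsGoodParamLaw (rmax : ℝ) (P : ProbabilityMeasure (MDPParam S A)) : Prop :=
  ∀ᵐ ω ∂(P : Measure (MDPParam S A)), IsGoodParam rmax ω

theorem IsGoodAmbiguity.isGoodParamLaw {G : S → Set (ProbabilityMeasure (MDPParam S A))}
    (hG : IsGoodAmbiguity rmax G) {s : S} {P : ProbabilityMeasure (MDPParam S A)}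
    (hP : P ∈ G s) : IsGoodParamLaw rmax P := by
  obtain ⟨-, -, -, K, hK, hKgood, hPK⟩ := hG s
  filter_upwards [(mem_ae_iff_prob_eq_one hK.measurableSet).2 (hPK P hP)] with ω hω
  exact hKgood ω hω

def meanReward (P : ProbabilityMeasure (MDPParam S A)) (a : A) : ℝ :=
  ∫ ω, ω.2.1 a ∂(P : Measure (MDPParam S A))

def meanTrans (P : ProbabilityMeasure (MDPParam S A)) (a : A) (s' : S) : ℝ :=
  ∫ ω, ω.1 a s' ∂(P : Measure (MDPParam S A))

variable {P : ProbabilityMeasure (MDPParam S A)}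

theorem IsGoodParamLaw.integrable_reward (hP : IsGoodParamLaw rmax P) (a : A) :
    Integrable (fun ω : MDPParam S A => ω.2.1 a) (P : Measure (MDPParam S A)) := by
  refine Integrable.of_bound (by fun_prop) rmax ?_
  filter_upwards [hP] with ω hω
  rw [Real.norm_eq_abs, abs_le]
  constructor <;> linarith [(hω.2 a).1, (hω.2 a).2]

theorem IsGoodParamLaw.integrable_trans (hP : IsGoodParamLaw rmax P) (a : A) (s' : S) :
    Integrable (fun ω : MDPParam S A => ω.1 a s') (P : Measure (MDPParam S A)) := by
  refine Integrable.of_bound (by fun_prop) 1 ?_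
  filter_upwards [hP] with ω hω
  have hle : ω.1 a s' ≤ 1 :=
    (hω.1 a).2 ▸ Finset.single_le_sum (fun s _ => (hω.1 a).1 s) (Finset.mem_univ s')
  rw [Real.norm_eq_abs, abs_le]
  constructor <;> linarith [(hω.1 a).1 s']

theorem IsGoodParamLaw.meanReward_mem_Icc (hP : IsGoodParamLaw rmax P) (a : A) :
    meanReward P a ∈ Set.Icc 0 rmax := by
  refine ⟨integral_nonneg_of_ae (hP.mono fun ω hω => (hω.2 a).1), ?_⟩
  simpa [meanReward] using integral_mono_ae (hP.integrable_reward a) (integrable_const rmax)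
    (hP.mono fun ω hω => (hω.2 a).2)

theorem IsGoodParamLaw.meanTrans_mem_stdSimplex (hP : IsGoodParamLaw rmax P) (a : A) :
    meanTrans P a ∈ stdSimplex ℝ S := by
  refine ⟨fun s' => integral_nonneg_of_ae (hP.mono fun ω hω => (hω.1 a).1 s'), ?_⟩
  simp only [meanTrans]
  rw [← integral_finsetSum _ fun s' _ => hP.integrable_trans a s']
  simpa using integral_congr_ae (hP.mono fun ω hω => (hω.1 a).2)

theorem IsGoodParamLaw.integral_sum_mul_reward (hP : IsGoodParamLaw rmax P) (w : A → ℝ) :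
    ∫ ω, ∑ a, w a * ω.2.1 a ∂(P : Measure (MDPParam S A)) = ∑ a, w a * meanReward P a := by
  have := hP.integrable_reward
  rw [integral_finsetSum _ (by fun_prop)]
  simp only [integral_const_mul, meanReward]

theorem IsGoodParamLaw.integral_sum_mul_trans (hP : IsGoodParamLaw rmax P) (w : A → ℝ)
    (c : A → S → ℝ) :
    ∫ ω, ∑ a, w a * ∑ s', ω.1 a s' * c a s' ∂(P : Measure (MDPParam S A))
      = ∑ a, w a * ∑ s', meanTrans P a s' * c a s' := by
  have := hP.integrable_trans
  rw [integral_finsetSum _ (by fun_prop)]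
  refine Finset.sum_congr rfl fun a _ => ?_
  rw [integral_const_mul, integral_finsetSum _ (by fun_prop)]
  simp only [integral_mul_const, meanTrans]

end MeanParameters

section QValue

variable {rmax γ : ℝ} {P : ProbabilityMeasure (MDPParam S A)}

def actionValue (γ : ℝ) (P : ProbabilityMeasure (MDPParam S A)) (c : A → S → ℝ) (a : A) :
    ℝ :=
  meanReward P a + γ * ∑ s', meanTrans P a s' * c a s'

def qValue (γ : ℝ) (P : ProbabilityMeasure (MDPParam S A)) (πs : A → ℝ) (c : A → S → ℝ) :
    ℝ :=
  ∑ a, πs a * actionValue γ P c a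

theorem IsGoodParamLaw.bellmanLP_eq_qValue (hP : IsGoodParamLaw rmax P) (πs : A → ℝ)
    (v : S → ℝ) : bellmanLP γ P πs v = qValue γ P πs (fun _ => v) := by
  have := hP.integrable_reward
  have := hP.integrable_trans
  rw [bellmanLP, integral_finsetSum _ (by fun_prop)]
  refine Finset.sum_congr rfl fun a _ => ?_
  rw [integral_const_mul, integral_add (by fun_prop) (by fun_prop), integral_const_mul,
    integral_finsetSum _ (by fun_prop)]
  simp only [integral_mul_const, actionValue, meanReward, meanTrans]

theorem IsGoodParamLaw.qValue_le_qValue_add (hP : IsGoodParamLaw rmax P) (hγ : 0 ≤ γ)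
    {πs : A → ℝ} (hπs : πs ∈ stdSimplex ℝ A) {c c' : A → S → ℝ} {b : ℝ}
    (h : ∀ a s', c a s' ≤ c' a s' + b) : qValue γ P πs c ≤ qValue γ P πs c' + γ * b := by
  refine sum_mul_le_sum_mul_add_of_mem_stdSimplex hπs fun a => ?_
  have := sum_mul_le_sum_mul_add_of_mem_stdSimplex (hP.meanTrans_mem_stdSimplex a) (h a)
  simp only [actionValue]
  nlinarith

theorem IsGoodParamLaw.qValue_mem_Icc (hP : IsGoodParamLaw rmax P) (hγ : 0 ≤ γ)
    {πs : A → ℝ} (hπs : πs ∈ stdSimplex ℝ A) {c : A → S → ℝ} {lo hi : ℝ}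
    (hc : ∀ a s', c a s' ∈ Set.Icc lo hi) :
    qValue γ P πs c ∈ Set.Icc (γ * lo) (rmax + γ * hi) := by
  refine (convex_Icc _ _).sum_mul_mem_of_mem_stdSimplex hπs fun a => ?_
  have hr := hP.meanReward_mem_Icc a
  have hp := (convex_Icc lo hi).sum_mul_mem_of_mem_stdSimplex (hP.meanTrans_mem_stdSimplex a)
    (hc a)
  constructor <;> simp only [actionValue] <;> nlinarith [hr.1, hr.2, hp.1, hp.2]

end QValue

section PolicyValue

variable {rmax γ : ℝ} {π : List (S × A) → S → A → ℝ}
  {Ps : S → ℕ → ProbabilityMeasure (MDPParam S A)}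

theorem expRewardAmb_zero_eq (hPs : ∀ s t, IsGoodParamLaw rmax (Ps s t)) (h : List (S × A))
    (s : S) : expRewardAmb π Ps 0 h s = ∑ a, π h s a * meanReward (Ps s h.length) a :=
  (hPs _ _).integral_sum_mul_reward _

theorem expRewardAmb_succ_eq (hPs : ∀ s t, IsGoodParamLaw rmax (Ps s t)) (k : ℕ)
    (h : List (S × A)) (s : S) :
    expRewardAmb π Ps (k + 1) h s = ∑ a, π h s a *
      ∑ s', meanTrans (Ps s h.length) a s' * expRewardAmb π Ps k (h ++ [(s, a)]) s' :=
  (hPs _ _).integral_sum_mul_trans _ fun a s' => expRewardAmb π Ps k (h ++ [(s, a)]) s'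

theorem expRewardAmb_mem_Icc (hPs : ∀ s t, IsGoodParamLaw rmax (Ps s t)) (hπ : IsHRPolicy π)
    (k : ℕ) (h : List (S × A)) (s : S) : expRewardAmb π Ps k h s ∈ Set.Icc 0 rmax := by
  induction k generalizing h s with
  | zero =>
    rw [expRewardAmb_zero_eq hPs]
    exact (convex_Icc 0 rmax).sum_mul_mem_of_mem_stdSimplex (hπ h s)
      (hPs _ _).meanReward_mem_Icc
  | succ k ih =>
    rw [expRewardAmb_succ_eq hPs]
    exact (convex_Icc 0 rmax).sum_mul_mem_of_mem_stdSimplex (hπ h s) fun a =>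
      (convex_Icc 0 rmax).sum_mul_mem_of_mem_stdSimplex ((hPs _ _).meanTrans_mem_stdSimplex a)
        fun s' => ih _ _

/-- `wDisc` continued from an arbitrary history `h` at state `s`. -/
def policyValue (γ : ℝ) (π : List (S × A) → S → A → ℝ)
    (Ps : S → ℕ → ProbabilityMeasure (MDPParam S A)) (h : List (S × A)) (s : S) : ℝ :=
  ∑' k : ℕ, γ ^ k * expRewardAmb π Ps k h s

theorem hasSum_policyValue (hγ0 : 0 ≤ γ) (hγ1 : γ < 1)
    (hPs : ∀ s t, IsGoodParamLaw rmax (Ps s t)) (hπ : IsHRPolicy π) (h : List (S × A))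
    (s : S) : HasSum (fun k => γ ^ k * expRewardAmb π Ps k h s) (policyValue γ π Ps h s) := by
  refine (Summable.of_nonneg_of_le (fun k => ?_) (fun k => ?_)
    ((summable_geometric_of_lt_one hγ0 hγ1).mul_right rmax)).hasSum
  · exact mul_nonneg (pow_nonneg hγ0 k) (expRewardAmb_mem_Icc hPs hπ k h s).1
  · exact mul_le_mul_of_nonneg_left (expRewardAmb_mem_Icc hPs hπ k h s).2 (pow_nonneg hγ0 k)

theorem policyValue_mem_Icc (hγ0 : 0 ≤ γ) (hγ1 : γ < 1)
    (hPs : ∀ s t, IsGoodParamLaw rmax (Ps s t)) (hπ : IsHRPolicy π) (h : List (S × A))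
    (s : S) : policyValue γ π Ps h s ∈ Set.Icc 0 (rmax / (1 - γ)) := by
  have hE := expRewardAmb_mem_Icc hPs hπ (h := h) (s := s)
  have hV := hasSum_policyValue hγ0 hγ1 hPs hπ h s
  refine ⟨hV.nonneg fun k => mul_nonneg (pow_nonneg hγ0 k) (hE k).1, ?_⟩
  rw [div_eq_inv_mul]
  exact hasSum_le (fun k => mul_le_mul_of_nonneg_left (hE k).2 (pow_nonneg hγ0 k)) hV
    ((hasSum_geometric_of_lt_one hγ0 hγ1).mul_right rmax)

theorem policyValue_eq_qValue (hγ0 : 0 ≤ γ) (hγ1 : γ < 1)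
    (hPs : ∀ s t, IsGoodParamLaw rmax (Ps s t)) (hπ : IsHRPolicy π) (h : List (S × A))
    (s : S) : policyValue γ π Ps h s = qValue γ (Ps s h.length) (π h s)
      (fun a s' => policyValue γ π Ps (h ++ [(s, a)]) s') := by
  have hV := hasSum_policyValue hγ0 hγ1 hPs hπ
  have h0 := expRewardAmb_zero_eq hPs (π := π) h s
  have hsucc := fun k => expRewardAmb_succ_eq hPs (π := π) k h s
  generalize Ps s h.length = P at h0 hsucc ⊢
  set V : A → S → ℝ := fun a s' => policyValue γ π Ps (h ++ [(s, a)]) s'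
  have hrow : ∀ a, HasSum
      (fun k => ∑ s', meanTrans P a s' * (γ ^ k * expRewardAmb π Ps k (h ++ [(s, a)]) s'))
      (∑ s', meanTrans P a s' * V a s') := fun a =>
    hasSum_sum fun s' _ => (hV _ _).mul_left _
  have htail : HasSum (fun k => γ ^ (k + 1) * expRewardAmb π Ps (k + 1) h s)
      (γ * ∑ a, π h s a * ∑ s', meanTrans P a s' * V a s') := by
    have hterm : (fun k => γ ^ (k + 1) * expRewardAmb π Ps (k + 1) h s) = fun k => γ *
        ∑ a, π h s a * ∑ s', meanTrans P a s' *
          (γ ^ k * expRewardAmb π Ps k (h ++ [(s, a)]) s') := by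
      funext k
      simp only [hsucc, Finset.mul_sum, pow_succ]
      exact Finset.sum_congr rfl fun a _ => Finset.sum_congr rfl fun s' _ => by ring
    rw [hterm]
    exact (hasSum_sum fun a _ => (hrow a).mul_left (π h s a)).mul_left γ
  have hhead : qValue γ P (π h s) V - ∑ k ∈ Finset.range 1, γ ^ k * expRewardAmb π Ps k h s
      = γ * ∑ a, π h s a * ∑ s', meanTrans P a s' * V a s' := by
    simp only [qValue, actionValue, h0, Finset.range_one, Finset.sum_singleton, pow_zero,
      one_mul, mul_add, Finset.sum_add_distrib, Finset.mul_sum, add_sub_cancel_left]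
    exact Finset.sum_congr rfl fun a _ => Finset.sum_congr rfl fun s' _ => by ring
  exact (((hasSum_nat_add_iff' 1).1 (hhead ▸ htail)).unique (hV h s)).symm

end PolicyValue

section ValueComparison

variable {rmax γ : ℝ} {π : List (S × A) → S → A → ℝ}
  {Ps : S → ℕ → ProbabilityMeasure (MDPParam S A)} {v : S → ℝ}

theorem le_policyValue_of_le_bellmanLP (hγ0 : 0 ≤ γ) (hγ1 : γ < 1)
    (hPs : ∀ s t, IsGoodParamLaw rmax (Ps s t)) (hπ : IsHRPolicy π)
    (hv : ∀ h s, v s ≤ bellmanLP γ (Ps s h.length) (π h s) v) (h : List (S × A)) (s : S) :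
    v s ≤ policyValue γ π Ps h s := by
  set D : List (S × A) × S → ℝ := fun x => v x.2 - policyValue γ π Ps x.1 x.2
  obtain ⟨M, hM⟩ := Finite.bddAbove_range v
  have hbdd : BddAbove (Set.range D) := ⟨M, Set.forall_mem_range.2 fun x => by
    linarith [hM ⟨x.2, rfl⟩, (policyValue_mem_Icc hγ0 hγ1 hPs hπ x.1 x.2).1]⟩
  have hstep : ∀ b, (∀ x, D x ≤ b) → ∀ x, D x ≤ 0 + γ * b := by
    rintro b hb ⟨h, s⟩
    have := (hPs s h.length).qValue_le_qValue_add hγ0 (hπ h s) (b := b) (c := fun _ => v)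
      (c' := fun a s' => policyValue γ π Ps (h ++ [(s, a)]) s') fun a s' => by
        linarith [hb (h ++ [(s, a)], s')]
    rw [← (hPs s h.length).bellmanLP_eq_qValue, ← policyValue_eq_qValue hγ0 hγ1 hPs hπ] at this
    linarith [hv h s]
  have := le_div_one_sub_of_forall_le_add_mul hγ1 hbdd hstep (h, s)
  simp only [D, zero_div] at this
  linarith

theorem policyValue_le_of_bellmanLP_le (hγ0 : 0 ≤ γ) (hγ1 : γ < 1)
    (hPs : ∀ s t, IsGoodParamLaw rmax (Ps s t)) (hπ : IsHRPolicy π) {ε : ℝ}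
    (hv : ∀ h s, bellmanLP γ (Ps s h.length) (π h s) v ≤ v s + ε) (h : List (S × A)) (s : S) :
    policyValue γ π Ps h s ≤ v s + ε / (1 - γ) := by
  set D : List (S × A) × S → ℝ := fun x => policyValue γ π Ps x.1 x.2 - v x.2
  obtain ⟨m, hm⟩ := Finite.bddBelow_range v
  have hbdd : BddAbove (Set.range D) := ⟨rmax / (1 - γ) - m, Set.forall_mem_range.2 fun x => by
    linarith [hm ⟨x.2, rfl⟩, (policyValue_mem_Icc hγ0 hγ1 hPs hπ x.1 x.2).2]⟩
  have hstep : ∀ b, (∀ x, D x ≤ b) → ∀ x, D x ≤ ε + γ * b := by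
    rintro b hb ⟨h, s⟩
    have := (hPs s h.length).qValue_le_qValue_add hγ0 (hπ h s) (b := b) (c' := fun _ => v)
      (c := fun a s' => policyValue γ π Ps (h ++ [(s, a)]) s') fun a s' => by
        linarith [hb (h ++ [(s, a)], s')]
    rw [← (hPs s h.length).bellmanLP_eq_qValue, ← policyValue_eq_qValue hγ0 hγ1 hPs hπ] at this
    linarith [hv h s]
  have := le_div_one_sub_of_forall_le_add_mul hγ1 hbdd hstep (h, s)
  simp only [D] at this
  linarith

end ValueComparison

section RobustOperator

variable {rmax γ : ℝ} {G : S → Set (ProbabilityMeasure (MDPParam S A))} {v : S → ℝ}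

theorem IsGoodAmbiguity.exists_mem_integral_eq (hG : IsGoodAmbiguity rmax G) {s : S}
    {P Q : ProbabilityMeasure (MDPParam S A)} (hP : P ∈ G s) (hQ : Q ∈ G s) {t₁ t₂ : ℝ}
    (ht₁ : 0 ≤ t₁) (ht₂ : 0 ≤ t₂) (ht : t₁ + t₂ = 1) :
    ∃ R ∈ G s, ∀ f : MDPParam S A → ℝ, Integrable f (P : Measure (MDPParam S A)) →
      Integrable f (Q : Measure (MDPParam S A)) →
      ∫ ω, f ω ∂(R : Measure (MDPParam S A))
        = t₁ * ∫ ω, f ω ∂(P : Measure (MDPParam S A))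
          + t₂ * ∫ ω, f ω ∂(Q : Measure (MDPParam S A)) := by
  set θ := ENNReal.ofReal t₁
  have hθ : θ ≤ 1 := ENNReal.ofReal_le_one.2 (by linarith)
  have hθ₂ : 1 - θ = ENNReal.ofReal t₂ := by
    rw [← ENNReal.ofReal_one, ← ENNReal.ofReal_sub _ ht₁, ← ht, add_sub_cancel_left]
  have hR : IsProbabilityMeasure
      (θ • (P : Measure (MDPParam S A)) + (1 - θ) • (Q : Measure (MDPParam S A))) :=
    ⟨by simp [add_tsub_cancel_of_le hθ]⟩
  refine ⟨⟨_, hR⟩, (hG s).2.1 P hP Q hQ θ hθ _ rfl, fun f hfP hfQ => ?_⟩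
  rw [ProbabilityMeasure.coe_mk, integral_add_measure (hfP.smul_measure ENNReal.ofReal_ne_top)
    (hfQ.smul_measure (hθ₂ ▸ ENNReal.ofReal_ne_top)), integral_smul_measure,
    integral_smul_measure, hθ₂, ENNReal.toReal_ofReal ht₁, ENNReal.toReal_ofReal ht₂,
    smul_eq_mul, smul_eq_mul]

theorem IsGoodAmbiguity.convex_image_actionValue (hG : IsGoodAmbiguity rmax G) (s : S)
    (c : A → S → ℝ) : Convex ℝ ((fun P => actionValue γ P c) '' G s) := by
  rintro _ ⟨P, hP, rfl⟩ _ ⟨Q, hQ, rfl⟩ t₁ t₂ ht₁ ht₂ ht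
  obtain ⟨R, hR, hRint⟩ := hG.exists_mem_integral_eq hP hQ ht₁ ht₂ ht
  have hP' := hG.isGoodParamLaw hP
  have hQ' := hG.isGoodParamLaw hQ
  refine ⟨R, hR, funext fun a => ?_⟩
  have hr : meanReward R a = t₁ * meanReward P a + t₂ * meanReward Q a :=
    hRint _ (hP'.integrable_reward a) (hQ'.integrable_reward a)
  have hp : ∀ s', meanTrans R a s' = t₁ * meanTrans P a s' + t₂ * meanTrans Q a s' :=
    fun s' => hRint _ (hP'.integrable_trans a s') (hQ'.integrable_trans a s')
  simp only [actionValue, hr, hp, Pi.add_apply, Pi.smul_apply, smul_eq_mul, add_mul,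
    Finset.sum_add_distrib, mul_assoc, ← Finset.mul_sum]
  ring

theorem IsGoodAmbiguity.bellmanLP_mem_Icc (hG : IsGoodAmbiguity rmax G) (hγ : 0 ≤ γ) {s : S}
    {P : ProbabilityMeasure (MDPParam S A)} (hP : P ∈ G s) {πs : A → ℝ}
    (hπs : πs ∈ stdSimplex ℝ A) {lo hi : ℝ} (hv : ∀ s', v s' ∈ Set.Icc lo hi) :
    bellmanLP γ P πs v ∈ Set.Icc (γ * lo) (rmax + γ * hi) := by
  rw [(hG.isGoodParamLaw hP).bellmanLP_eq_qValue]
  exact (hG.isGoodParamLaw hP).qValue_mem_Icc hγ hπs fun _ s' => hv s'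

theorem IsGoodAmbiguity.robInf_le_bellmanLP (hG : IsGoodAmbiguity rmax G) (hγ : 0 ≤ γ) {s : S}
    {P : ProbabilityMeasure (MDPParam S A)} (hP : P ∈ G s) {πs : A → ℝ}
    (hπs : πs ∈ stdSimplex ℝ A) : robInf γ G s πs v ≤ bellmanLP γ P πs v := by
  obtain ⟨lo, hlo⟩ := Finite.bddBelow_range v
  obtain ⟨hi, hhi⟩ := Finite.bddAbove_range v
  have hv : ∀ s', v s' ∈ Set.Icc lo hi := fun s' => ⟨hlo ⟨s', rfl⟩, hhi ⟨s', rfl⟩⟩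
  exact ciInf_le ⟨γ * lo, Set.forall_mem_range.2 fun Q =>
    (hG.bellmanLP_mem_Icc hγ Q.2 hπs hv).1⟩ (⟨P, hP⟩ : G s)

theorem IsGoodAmbiguity.robInf_le_bellmanL (hG : IsGoodAmbiguity rmax G) (hγ : 0 ≤ γ) (s : S)
    {πs : A → ℝ} (hπs : πs ∈ stdSimplex ℝ A) : robInf γ G s πs v ≤ bellmanL γ G v s := by
  obtain ⟨lo, hlo⟩ := Finite.bddBelow_range v
  obtain ⟨hi, hhi⟩ := Finite.bddAbove_range v
  have hv : ∀ s', v s' ∈ Set.Icc lo hi := fun s' => ⟨hlo ⟨s', rfl⟩, hhi ⟨s', rfl⟩⟩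
  obtain ⟨P₀, hP₀⟩ := (hG s).1
  refine le_ciSup (f := fun πs' : stdSimplex ℝ A => robInf γ G s πs' v)
    ⟨rmax + γ * hi, Set.forall_mem_range.2 fun πs' => ?_⟩ ⟨πs, hπs⟩
  exact (hG.robInf_le_bellmanLP hγ hP₀ πs'.2).trans (hG.bellmanLP_mem_Icc hγ hP₀ πs'.2 hv).2

theorem IsGoodAmbiguity.exists_mem_forall_bellmanLP_le (hG : IsGoodAmbiguity rmax G)
    (hγ : 0 ≤ γ) (s : S) {ε : ℝ} (hε : 0 < ε) :
    ∃ P ∈ G s, ∀ πs ∈ stdSimplex ℝ A, bellmanLP γ P πs v ≤ bellmanL γ G v s + ε := by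
  by_contra! hcon
  obtain ⟨πs, hπs, hle⟩ := exists_mem_stdSimplex_forall_le_sum_mul
    (hG.convex_image_actionValue (γ := γ) s fun _ => v) ((hG s).1.image _)
    (B := bellmanL γ G v s + ε) <| by
      rintro _ ⟨P, hP, rfl⟩
      obtain ⟨πs, hπs, hlt⟩ := hcon P hP
      exact ⟨πs, hπs, by rwa [(hG.isGoodParamLaw hP).bellmanLP_eq_qValue] at hlt⟩
  have : Nonempty (G s) := (hG s).1.to_subtype
  have hrob : bellmanL γ G v s + ε ≤ robInf γ G s πs v := le_ciInf fun P => by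
    rw [(hG.isGoodParamLaw P.2).bellmanLP_eq_qValue]
    exact hle _ ⟨P, P.2, rfl⟩
  linarith [hG.robInf_le_bellmanL hγ s hπs (v := v)]

theorem IsSRobustStationary.le_bellmanLP {πstar : S → A → ℝ}
    (hstar : IsSRobustStationary γ G v πstar) (hG : IsGoodAmbiguity rmax G) (hγ : 0 ≤ γ)
    {s : S} {P : ProbabilityMeasure (MDPParam S A)} (hP : P ∈ G s) :
    v s ≤ bellmanLP γ P (πstar s) v :=
  calc v s = robInf γ G s (πstar s) v := by rw [(hstar.2 s).2, hstar.1]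
    _ ≤ bellmanLP γ P (πstar s) v := hG.robInf_le_bellmanLP hγ hP (hstar.2 s).1

end RobustOperator

section Values

variable {rmax γ : ℝ} {G : S → Set (ProbabilityMeasure (MDPParam S A))} {v : S → ℝ}
  {Ps : S → ℕ → ProbabilityMeasure (MDPParam S A)}

theorem IsGoodAmbiguity.wDisc_nonneg (hG : IsGoodAmbiguity rmax G) (hγ0 : 0 ≤ γ)
    (hγ1 : γ < 1) {π : List (S × A) → S → A → ℝ} (hπ : IsHRPolicy π)
    (hPs : ∀ s t, Ps s t ∈ G s) (s₁ : S) : 0 ≤ wDisc γ π Ps s₁ :=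
  (policyValue_mem_Icc hγ0 hγ1 (fun s t => hG.isGoodParamLaw (hPs s t)) hπ [] s₁).1

theorem IsSRobustStationary.le_wDisc {πstar : S → A → ℝ}
    (hstar : IsSRobustStationary γ G v πstar) (hG : IsGoodAmbiguity rmax G) (hγ0 : 0 ≤ γ)
    (hγ1 : γ < 1) (hPs : ∀ s t, Ps s t ∈ G s) (s₁ : S) :
    v s₁ ≤ wDisc γ (fun _ s => πstar s) Ps s₁ :=
  le_policyValue_of_le_bellmanLP hγ0 hγ1 (fun s t => hG.isGoodParamLaw (hPs s t))
    (fun _ s => (hstar.2 s).1) (fun _ s => hstar.le_bellmanLP hG hγ0 (hPs s _)) [] s₁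

theorem IsGoodAmbiguity.exists_wDisc_stationary_le (hG : IsGoodAmbiguity rmax G) (hγ0 : 0 ≤ γ)
    (hγ1 : γ < 1) (hfix : bellmanL γ G v = v) {π : List (S × A) → S → A → ℝ}
    (hπ : IsHRPolicy π) (s₁ : S) {c : ℝ} (hc : 0 < c) :
    ∃ Q : S → ProbabilityMeasure (MDPParam S A), (∀ s, Q s ∈ G s) ∧
      wDisc γ π (fun s _ => Q s) s₁ ≤ v s₁ + c := by
  have hγ1' : 0 < 1 - γ := sub_pos.2 hγ1
  choose Q hQ hQle using fun s => hG.exists_mem_forall_bellmanLP_le hγ0 s (v := v)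
    (mul_pos hc hγ1')
  refine ⟨Q, hQ, ?_⟩
  have := policyValue_le_of_bellmanLP_le hγ0 hγ1 (fun s _ => hG.isGoodParamLaw (hQ s)) hπ
    (fun h s => hfix ▸ hQle s _ (hπ h s)) [] s₁
  rwa [mul_div_cancel_right₀ _ hγ1'.ne'] at this

end Values

theorem stationary_nonstationary_same_value_general
    (γ rmax : ℝ) (hγ : 0 < γ) (hγ1 : γ < 1)
    (G : S → Set (ProbabilityMeasure (MDPParam S A)))
    (hG : IsGoodAmbiguity rmax G)
    (s₁ : S) (vinf : S → ℝ) (πstar : S → A → ℝ)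
    (hπstar : IsSRobustStationary γ G vinf πstar) :
    (⨆ π : {π : List (S × A) → S → A → ℝ // IsHRPolicy π},
        ⨅ Qs : {Qs : S → ProbabilityMeasure (MDPParam S A) // ∀ s, Qs s ∈ G s},
          wDisc γ (π : List (S × A) → S → A → ℝ)
            (fun s _ => (Qs : S → ProbabilityMeasure (MDPParam S A)) s) s₁)
      = (⨆ π : {π : List (S × A) → S → A → ℝ // IsHRPolicy π},
          ⨅ Ps : {Ps : S → ℕ → ProbabilityMeasure (MDPParam S A) // ∀ s t, Ps s t ∈ G s},
            wDisc γ (π : List (S × A) → S → A → ℝ)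
              (Ps : S → ℕ → ProbabilityMeasure (MDPParam S A)) s₁) ∧
    (⨅ Qs : {Qs : S → ProbabilityMeasure (MDPParam S A) // ∀ s, Qs s ∈ G s},
        wDisc γ (fun _ s => πstar s)
          (fun s _ => (Qs : S → ProbabilityMeasure (MDPParam S A)) s) s₁)
      = (⨆ π : {π : List (S × A) → S → A → ℝ // IsHRPolicy π},
          ⨅ Qs : {Qs : S → ProbabilityMeasure (MDPParam S A) // ∀ s, Qs s ∈ G s},
            wDisc γ (π : List (S × A) → S → A → ℝ)
              (fun s _ => (Qs : S → ProbabilityMeasure (MDPParam S A)) s) s₁) ∧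
    (⨅ Ps : {Ps : S → ℕ → ProbabilityMeasure (MDPParam S A) // ∀ s t, Ps s t ∈ G s},
        wDisc γ (fun _ s => πstar s) (Ps : S → ℕ → ProbabilityMeasure (MDPParam S A)) s₁)
      = (⨆ π : {π : List (S × A) → S → A → ℝ // IsHRPolicy π},
          ⨅ Ps : {Ps : S → ℕ → ProbabilityMeasure (MDPParam S A) // ∀ s t, Ps s t ∈ G s},
            wDisc γ (π : List (S × A) → S → A → ℝ)
              (Ps : S → ℕ → ProbabilityMeasure (MDPParam S A)) s₁) := by
  have hγ0 := hγ.le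
  have : Nonempty {Qs : S → ProbabilityMeasure (MDPParam S A) // ∀ s, Qs s ∈ G s} :=
    ⟨⟨fun s => (hG s).1.some, fun s => (hG s).1.some_mem⟩⟩
  obtain ⟨hsup, hnsup, hstat, hnstat⟩ := iSup_iInf_eq_of_le_of_forall_exists_le
    (F := fun (π : {π : List (S × A) → S → A → ℝ // IsHRPolicy π})
      (Ps : {Ps : S → ℕ → ProbabilityMeasure (MDPParam S A) // ∀ s t, Ps s t ∈ G s}) =>
        wDisc γ π.1 Ps.1 s₁)
    (fun (Qs : {Qs : S → ProbabilityMeasure (MDPParam S A) // ∀ s, Qs s ∈ G s}) =>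
      ⟨fun s _ => Qs.1 s, fun s _ => Qs.2 s⟩)
    (fun π => ⟨0, Set.forall_mem_range.2 fun Ps => hG.wDisc_nonneg hγ0 hγ1 π.2 Ps.2 s₁⟩)
    (i₀ := ⟨fun _ s => πstar s, fun _ s => (hπstar.2 s).1⟩)
    (fun Ps => hπstar.le_wDisc hG hγ0 hγ1 Ps.2 s₁)
    (fun π c hc =>
      let ⟨Q, hQ, hle⟩ := hG.exists_wDisc_stationary_le hγ0 hγ1 hπstar.1 π.2 s₁ hc
      ⟨⟨Q, hQ⟩, hle⟩)
  exact ⟨hsup.trans hnsup.symm, hstat.trans hsup.symm, hnstat.trans hnsup.symm⟩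

/-- the stationary and non-stationary infinite-horizon distributionally robust
MDPs have the same optimal value, and this common value is attained by any S-robust
strategy in both models. -/
theorem stationary_nonstationary_same_value
    (γ rmax : ℝ) (hγ : 0 < γ) (hγ1 : γ < 1) (hrmax : 0 ≤ rmax)
    (G : S → Set (ProbabilityMeasure (MDPParam S A)))
    (hG : IsGoodAmbiguity rmax G)
    (s₁ : S) (vinf : S → ℝ) (πstar : S → A → ℝ)
    (hπstar : IsSRobustStationary γ G vinf πstar) :
    (⨆ π : {π : List (S × A) → S → A → ℝ // IsHRPolicy π},
        ⨅ Qs : {Qs : S → ProbabilityMeasure (MDPParam S A) // ∀ s, Qs s ∈ G s},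
          wDisc γ (π : List (S × A) → S → A → ℝ)
            (fun s _ => (Qs : S → ProbabilityMeasure (MDPParam S A)) s) s₁)
      = (⨆ π : {π : List (S × A) → S → A → ℝ // IsHRPolicy π},
          ⨅ Ps : {Ps : S → ℕ → ProbabilityMeasure (MDPParam S A) // ∀ s t, Ps s t ∈ G s},
            wDisc γ (π : List (S × A) → S → A → ℝ)
              (Ps : S → ℕ → ProbabilityMeasure (MDPParam S A)) s₁) ∧
    (⨅ Qs : {Qs : S → ProbabilityMeasure (MDPParam S A) // ∀ s, Qs s ∈ G s},
        wDisc γ (fun _ s => πstar s)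
          (fun s _ => (Qs : S → ProbabilityMeasure (MDPParam S A)) s) s₁)
      = (⨆ π : {π : List (S × A) → S → A → ℝ // IsHRPolicy π},
          ⨅ Qs : {Qs : S → ProbabilityMeasure (MDPParam S A) // ∀ s, Qs s ∈ G s},
            wDisc γ (π : List (S × A) → S → A → ℝ)
              (fun s _ => (Qs : S → ProbabilityMeasure (MDPParam S A)) s) s₁) ∧
    (⨅ Ps : {Ps : S → ℕ → ProbabilityMeasure (MDPParam S A) // ∀ s t, Ps s t ∈ G s},
        wDisc γ (fun _ s => πstar s) (Ps : S → ℕ → ProbabilityMeasure (MDPParam S A)) s₁)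
      = (⨆ π : {π : List (S × A) → S → A → ℝ // IsHRPolicy π},
          ⨅ Ps : {Ps : S → ℕ → ProbabilityMeasure (MDPParam S A) // ∀ s t, Ps s t ∈ G s},
            wDisc γ (π : List (S × A) → S → A → ℝ)
              (Ps : S → ℕ → ProbabilityMeasure (MDPParam S A)) s₁) :=
  stationary_nonstationary_same_value_general γ rmax hγ hγ1 G hG s₁ vinf πstar hπstar
end
end
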